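/- Two-sided bound of the power gap by the perturbed energy on D (upper half): with σ = 1+(k−1)χ_D and k>1, in the abstract setting one has (k−1)/k · ∫_D |∇u₀|² ≤ W₀ − W ≤ (k−1) ∫_D |∇u₀|². Abstractly: let H be a real inner product space, D a 'localization' given by a positive semidefinite symmetric bilinear form b on H, a₀(v,w)=⟨v,w⟩, a(v,w)=⟨v,w⟩+(k−1)b(v,w) with k>1, and u, u₀ as above; then ((k−1)/k)·b(u₀,u₀) ≤ a₀(u₀,u₀) − a(u,u) ≤ (k−1)·b(u₀,u₀). -/

import Mathlib

/-! Write `e = u₀ - u`. Subtracting the two variational equations shows that `e` represents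
`(k - 1) b(u, ·)` in the inner product, so the gap is `(k - 1) b(u, u₀)` and `⟪e, e⟫ = (k - 1) b(u, e)`.
With `b(u₀, u₀) = b(u, u) + 2 b(u, e) + b(e, e)`, the upper bound reduces to `b(e, e) + b(u, e) ≥ 0`,
and the lower bound to `b(u, e) ≤ (k - 1) b(u, u)`, which follows from Cauchy–Schwarz for `b`
together with `b(e, e) ≤ ⟪e, e⟫ = (k - 1) b(u, e)`. -/

open scoped RealInnerProductSpace

namespace PowerGap

variable {H : Type*} [NormedAddCommGroup H] [InnerProductSpace ℝ H]
  {b : LinearMap.BilinForm ℝ H} {c : ℝ} {u u₀ : H}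

lemma inner_sub_eq_mul_apply (hsol : ∀ v, ⟪u, v⟫ + c * b u v = ⟪u₀, v⟫) (v : H) :
    ⟪u₀ - u, v⟫ = c * b u v := by
  rw [inner_sub_left, ← hsol]
  ring

lemma inner_self_sub_energy_eq (hsol : ∀ v, ⟪u, v⟫ + c * b u v = ⟪u₀, v⟫) :
    ⟪u₀, u₀⟫ - (⟪u, u⟫ + c * b u u) = c * b u u₀ := by
  rw [hsol, ← inner_sub_eq_mul_apply hsol, ← inner_sub_right, real_inner_comm]

lemma apply_add_add_self (hsym : ∀ v w, b v w = b w v) (x y : H) :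
    b (x + y) (x + y) = b x x + 2 * b x y + b y y := by
  simp only [map_add, LinearMap.add_apply, hsym y x]
  ring

lemma apply_self_eq_apply_self_add_sub (hsym : ∀ v w, b v w = b w v) (x y : H) :
    b y y = b x x + 2 * b x (y - x) + b (y - x) (y - x) := by
  rw [← apply_add_add_self hsym, add_sub_cancel]

lemma apply_eq_apply_self_add_apply_sub (x y : H) : b x y = b x x + b x (y - x) := by
  rw [← map_add, add_sub_cancel]

lemma apply_sub_nonneg (hc : 0 < c) (hsol : ∀ v, ⟪u, v⟫ + c * b u v = ⟪u₀, v⟫) :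
    0 ≤ b u (u₀ - u) := by
  have h := real_inner_self_nonneg (x := u₀ - u)
  rw [inner_sub_eq_mul_apply hsol] at h
  exact nonneg_of_mul_nonneg_right h hc

lemma apply_sub_le_mul_apply_self (hc : 0 < c) (hsol : ∀ v, ⟪u, v⟫ + c * b u v = ⟪u₀, v⟫)
    (hsym : ∀ v w, b v w = b w v) (hnonneg : ∀ v, 0 ≤ b v v) (hle : ∀ v, b v v ≤ ⟪v, v⟫) :
    b u (u₀ - u) ≤ c * b u u := by
  set e := u₀ - u
  have hCS : b u e * b u e ≤ b u u * b e e := by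
    simpa only [hsym e u] using b.apply_mul_apply_le_of_forall_zero_le hnonneg u e
  have hee : b e e ≤ c * b u e := (hle e).trans_eq (inner_sub_eq_mul_apply hsol e)
  rcases (apply_sub_nonneg hc hsol).eq_or_lt with h0 | hpos
  · rw [← h0]
    exact mul_nonneg hc.le (hnonneg u)
  · refine le_of_mul_le_mul_right ?_ hpos
    calc b u e * b u e ≤ b u u * b e e := hCS
      _ ≤ b u u * (c * b u e) := mul_le_mul_of_nonneg_left hee (hnonneg u)
      _ = c * b u u * b u e := by ring

lemma apply_le_apply_self (hc : 0 < c) (hsol : ∀ v, ⟪u, v⟫ + c * b u v = ⟪u₀, v⟫)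
    (hsym : ∀ v w, b v w = b w v) (hnonneg : ∀ v, 0 ≤ b v v) :
    b u u₀ ≤ b u₀ u₀ := by
  rw [apply_eq_apply_self_add_apply_sub u u₀, apply_self_eq_apply_self_add_sub hsym u u₀]
  linarith [apply_sub_nonneg hc hsol, hnonneg (u₀ - u)]

lemma apply_self_le_one_add_mul_apply (hc : 0 < c)
    (hsol : ∀ v, ⟪u, v⟫ + c * b u v = ⟪u₀, v⟫) (hsym : ∀ v w, b v w = b w v)
    (hnonneg : ∀ v, 0 ≤ b v v) (hle : ∀ v, b v v ≤ ⟪v, v⟫) :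
    b u₀ u₀ ≤ (1 + c) * b u u₀ := by
  have hee : b (u₀ - u) (u₀ - u) ≤ c * b u (u₀ - u) :=
    (hle _).trans_eq (inner_sub_eq_mul_apply hsol _)
  rw [apply_eq_apply_self_add_apply_sub u u₀, apply_self_eq_apply_self_add_sub hsym u u₀]
  linarith [apply_sub_le_mul_apply_self hc hsol hsym hnonneg hle]

end PowerGap

open PowerGap in
theorem power_gap_two_sided_bound
    {H : Type*} [NormedAddCommGroup H] [InnerProductSpace ℝ H]
    (b : H →ₗ[ℝ] H →ₗ[ℝ] ℝ)
    (hbsym : ∀ v w, b v w = b w v)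
    (hb : ∀ v, 0 ≤ b v v ∧ b v v ≤ inner ℝ v v)
    (k : ℝ) (hk : 1 < k)
    (a : H →ₗ[ℝ] H →ₗ[ℝ] ℝ)
    (ha : ∀ v w, a v w = inner ℝ v w + (k - 1) * b v w)
    (L : H →ₗ[ℝ] ℝ)
    (u u₀ : H)
    (hu₀ : ∀ v, (inner ℝ u₀ v : ℝ) = L v)
    (hu : ∀ v, a u v = L v) :
    ((k - 1) / k) * b u₀ u₀ ≤ (inner ℝ u₀ u₀ : ℝ) - a u u ∧
    (inner ℝ u₀ u₀ : ℝ) - a u u ≤ (k - 1) * b u₀ u₀ := by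
  have hc : 0 < k - 1 := sub_pos.mpr hk
  have hsol : ∀ v, ⟪u, v⟫ + (k - 1) * b u v = ⟪u₀, v⟫ := fun v => by rw [← ha, hu, hu₀]
  have hnonneg : ∀ v, 0 ≤ b v v := fun v => (hb v).1
  have hgap : ⟪u₀, u₀⟫ - a u u = (k - 1) * b u u₀ := by
    rw [ha, inner_self_sub_energy_eq hsol]
  rw [hgap]
  constructor
  · have hlow := apply_self_le_one_add_mul_apply hc hsol hbsym hnonneg fun v => (hb v).2
    rw [add_sub_cancel] at hlow
    rw [div_mul_eq_mul_div, div_le_iff₀ (zero_lt_one.trans hk)]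
    linarith [mul_le_mul_of_nonneg_left hlow hc.le]
  · exact mul_le_mul_of_nonneg_left (apply_le_apply_self hc hsol hbsym hnonneg) hc.le
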